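/- Let G be a graph on vertex set [N] and let H be the step-up of G. Then the independence number of H satisfies α(H) ≤ N^{α(G)} + 1. -/

import Mathlib

/-- For distinct binary sequences, the first position where they differ. -/
noncomputable def delta {N : ℕ} (a b : Fin N → Bool) : ℕ :=
  sInf {i : ℕ | ∃ h : i < N, a ⟨i, h⟩ ≠ b ⟨i, h⟩}

/-- The lexicographic order on binary sequences. -/
def lexLt {N : ℕ} (a b : Fin N → Bool) : Prop :=
  ∃ h : delta a b < N, a ⟨delta a b, h⟩ < b ⟨delta a b, h⟩

/-- For `a ≺ b ≺ c`, the triple `{a,b,c}` is an edge of the step-up of `G` iff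
`δ(a,b) < δ(b,c)` and `{δ(a,b), δ(b,c)}` is an edge of `G`. -/
def stepEdge {N : ℕ} (G : SimpleGraph (Fin N)) (a b c : Fin N → Bool) : Prop :=
  delta a b < delta b c ∧
    ∃ (h1 : delta a b < N) (h2 : delta b c < N),
      G.Adj ⟨delta a b, h1⟩ ⟨delta b c, h2⟩

/-- The independence number of `G`: the largest size of an independent set. -/
noncomputable def indepNum {N : ℕ} (G : SimpleGraph (Fin N)) : ℕ :=
  sSup {n : ℕ | ∃ T : Finset (Fin N), T.card = n ∧ ∀ u ∈ T, ∀ v ∈ T, ¬ G.Adj u v}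

/-!
For `c ∈ S` let `D(c)` be the set of first-difference positions `δ(a, c)` with `a ∈ S`, `a ≺ c`.
For `a ≺ b ≺ c` the values `δ(a, b)` and `δ(b, c)` differ and `δ(a, c)` is their minimum. Hence
two values `u < v` of `D(c)` arise as `u = δ(a, b)`, `v = δ(b, c)` for some `a ≺ b ≺ c` in `S`, so
`D(c)` is independent in `G`; and `c ↦ D(c)` is injective on `S`, since for `c ≺ c'` the value
`δ(c, c')` lies in `D(c')` but not in `D(c)`. A nonempty set of at most `α(G)` vertices is the
image of a map `Fin α(G) → Fin N`, so there are at most `N ^ α(G) + 1` candidates for `D(c)`.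
-/

open Finset

section FirstDifference

variable {N : ℕ} {a b c : Fin N → Bool}

lemma delta_comm (a b : Fin N → Bool) : delta a b = delta b a := by
  simp only [delta, ne_comm]

lemma delta_spec (hab : a ≠ b) : ∃ h : delta a b < N, a ⟨delta a b, h⟩ ≠ b ⟨delta a b, h⟩ := by
  obtain ⟨i, hi⟩ := Function.ne_iff.mp hab
  exact Nat.sInf_mem (s := {i : ℕ | ∃ h : i < N, a ⟨i, h⟩ ≠ b ⟨i, h⟩}) ⟨i, i.2, hi⟩

lemma apply_eq_of_lt_delta {j : Fin N} (hj : (j : ℕ) < delta a b) : a j = b j := by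
  by_contra hne
  exact absurd (Nat.sInf_le ⟨j.2, hne⟩ : delta a b ≤ j) (not_le.mpr hj)

lemma delta_eq_of_agree {d : Fin N} (hd : a d ≠ b d) (hbelow : ∀ j : Fin N, j < d → a j = b j) :
    delta a b = d := by
  refine le_antisymm (Nat.sInf_le ⟨d.2, hd⟩) (not_lt.mp fun hlt => ?_)
  obtain ⟨h, hne⟩ := delta_spec fun hab : a = b => hd (by rw [hab])
  exact hne (hbelow ⟨delta a b, h⟩ hlt)

lemma delta_eq_left_of_lt (hab : a ≠ b) (h : delta a b < delta b c) : delta a c = delta a b := by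
  obtain ⟨hN, hne⟩ := delta_spec hab
  refine delta_eq_of_agree (d := ⟨delta a b, hN⟩) ?_ fun j hj => ?_
  · have hbc : b ⟨delta a b, hN⟩ = c ⟨delta a b, hN⟩ := apply_eq_of_lt_delta h
    rwa [← hbc]
  · have hjc : (j : ℕ) < delta b c := lt_trans hj h
    rw [apply_eq_of_lt_delta (b := b) hj, apply_eq_of_lt_delta hjc]

lemma delta_eq_min (hab : a ≠ b) (hbc : b ≠ c) (hne : delta a b ≠ delta b c) :
    delta a c = min (delta a b) (delta b c) := by
  rcases hne.lt_or_gt with h | h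
  · rw [delta_eq_left_of_lt hab h, min_eq_left h.le]
  · have hca := delta_eq_left_of_lt hbc.symm (by rwa [delta_comm c b, delta_comm b a])
    rw [delta_comm a c, hca, delta_comm c b, min_eq_right h.le]

end FirstDifference

section LexOrder

variable {N : ℕ} {a b c : Fin N → Bool}

lemma lexLt.ne (h : lexLt a b) : a ≠ b := by
  rintro rfl
  exact lt_irrefl _ h.2

lemma lexLt_or_lexLt (hab : a ≠ b) : lexLt a b ∨ lexLt b a := by
  obtain ⟨h, hne⟩ := delta_spec hab
  rcases hne.lt_or_gt with hlt | hgt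
  · exact Or.inl ⟨h, hlt⟩
  · exact Or.inr ⟨delta_comm b a ▸ h, by simpa only [delta_comm b a] using hgt⟩

lemma delta_ne_of_lexLt (hab : lexLt a b) (hbc : lexLt b c) : delta a b ≠ delta b c := by
  obtain ⟨h₁, hab⟩ := hab
  obtain ⟨h₂, hbc⟩ := hbc
  intro he
  have hb₁ := (Bool.lt_iff.mp hab).2
  have hb₂ := (Bool.lt_iff.mp hbc).1
  simp only [he] at hb₁
  exact Bool.noConfusion (hb₁.symm.trans hb₂)

lemma delta_eq_min_of_lexLt (hab : lexLt a b) (hbc : lexLt b c) :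
    delta a c = min (delta a b) (delta b c) :=
  delta_eq_min hab.ne hbc.ne (delta_ne_of_lexLt hab hbc)

lemma lexLt_and_delta_eq_of_delta_lt (hac : lexLt a c) (hbc : lexLt b c)
    (h : delta a c < delta b c) : lexLt a b ∧ delta a b = delta a c := by
  have hab : a ≠ b := by rintro rfl; exact h.false
  rcases lexLt_or_lexLt hab with hab | hba
  · have := delta_eq_min_of_lexLt hab hbc
    exact ⟨hab, by omega⟩
  · have := delta_eq_min_of_lexLt hba hac
    omega

end LexOrder

lemma card_le_indepNum {N : ℕ} (G : SimpleGraph (Fin N)) (T : Finset (Fin N))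
    (hT : ∀ u ∈ T, ∀ v ∈ T, ¬ G.Adj u v) : T.card ≤ indepNum G :=
  le_csSup ⟨N, by rintro n ⟨T, rfl, -⟩; simpa using T.card_le_univ⟩ ⟨T, rfl, hT⟩

lemma exists_image_eq_of_card_le {α : Type*} [DecidableEq α] {k : ℕ} {T : Finset α}
    (hT : T.Nonempty) (hk : T.card ≤ k) : ∃ f : Fin k → α, univ.image f = T := by
  have : Nonempty T := hT.to_subtype
  obtain ⟨e⟩ := Function.Embedding.nonempty_of_card_le (α := T) (β := Fin k) (by simpa using hk)
  refine ⟨fun j => ((Function.invFun (⇑e) j : T) : α), ?_⟩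
  ext x
  simp only [mem_image, mem_univ, true_and]
  refine ⟨?_, fun hx => ⟨e ⟨x, hx⟩, by rw [Function.leftInverse_invFun e.injective]⟩⟩
  rintro ⟨j, rfl⟩
  exact (Function.invFun e j).2

lemma card_filter_card_le {α : Type*} [Fintype α] [DecidableEq α] (k : ℕ) :
    (univ.filter fun T : Finset α => T.card ≤ k).card ≤ Fintype.card α ^ k + 1 := by
  have hsub : (univ.filter fun T : Finset α => T.card ≤ k) ⊆
      insert ∅ ((univ : Finset (Fin k → α)).image fun f => univ.image f) := by
    intro T hT
    rcases T.eq_empty_or_nonempty with rfl | hne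
    · exact mem_insert_self _ _
    · obtain ⟨f, hf⟩ := exists_image_eq_of_card_le hne (mem_filter.mp hT).2
      exact mem_insert_of_mem (mem_image.mpr ⟨f, mem_univ f, hf⟩)
  calc _ ≤ _ := card_le_card hsub
    _ ≤ ((univ : Finset (Fin k → α)).image fun f => univ.image f).card + 1 := card_insert_le _ _
    _ ≤ Fintype.card α ^ k + 1 := by
      gcongr
      simpa using card_image_le (s := (univ : Finset (Fin k → α)))

section StepUp

variable {N : ℕ} (S : Finset (Fin N → Bool))

open Classical in
noncomputable def lowerDeltas (c : Fin N → Bool) : Finset (Fin N) :=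
  univ.filter fun i => ∃ a ∈ S, lexLt a c ∧ delta a c = i

lemma mem_lowerDeltas {c : Fin N → Bool} {i : Fin N} :
    i ∈ lowerDeltas S c ↔ ∃ a ∈ S, lexLt a c ∧ delta a c = i := by
  simp [lowerDeltas]

lemma lowerDeltas_injOn : Set.InjOn (lowerDeltas S) S := by
  suffices h : ∀ c ∈ S, ∀ c' ∈ S, lexLt c c' → lowerDeltas S c ≠ lowerDeltas S c' by
    intro c hc c' hc' he
    by_contra hne
    rcases lexLt_or_lexLt hne with hlt | hlt
    · exact h c hc c' hc' hlt he
    · exact h c' hc' c hc hlt he.symm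
  intro c hc c' hc' hcc' he
  -- `δ(c, c')` lies in `lowerDeltas S c'`, but `δ(a, c) = δ(c, c')` with `a ≺ c ≺ c'` is impossible.
  have hmem : (⟨delta c c', hcc'.1⟩ : Fin N) ∈ lowerDeltas S c' :=
    (mem_lowerDeltas S).mpr ⟨c, hc, hcc', rfl⟩
  obtain ⟨a, -, hac, had⟩ := (mem_lowerDeltas S).mp (he ▸ hmem)
  exact delta_ne_of_lexLt hac hcc' had

variable {S}

lemma not_adj_of_mem_lowerDeltas (G : SimpleGraph (Fin N))
    (hS : ∀ a ∈ S, ∀ b ∈ S, ∀ c ∈ S, lexLt a b → lexLt b c → ¬ stepEdge G a b c)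
    {c : Fin N → Bool} (hc : c ∈ S) {u v : Fin N}
    (hu : u ∈ lowerDeltas S c) (hv : v ∈ lowerDeltas S c) : ¬ G.Adj u v := by
  wlog huv : u < v generalizing u v
  · rcases (not_lt.mp huv).eq_or_lt with rfl | hvu
    · exact G.irrefl
    · exact fun hadj => this hv hu hvu hadj.symm
  obtain ⟨a, ha, hac, hau⟩ := (mem_lowerDeltas S).mp hu
  obtain ⟨b, hb, hbc, hbv⟩ := (mem_lowerDeltas S).mp hv
  obtain rfl : u = ⟨delta a c, hac.1⟩ := Fin.ext hau.symm
  obtain rfl : v = ⟨delta b c, hbc.1⟩ := Fin.ext hbv.symm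
  obtain ⟨hab, hδ⟩ := lexLt_and_delta_eq_of_delta_lt hac hbc huv
  exact fun hadj => hS a ha b hb c hc hab hbc ⟨hδ ▸ huv, hδ ▸ hac.1, hbc.1, by simpa only [hδ]⟩

end StepUp

/-- If `H` is the step-up of `G`, then `α(H) ≤ N ^ α(G) + 1`: every independent set of
the step-up hypergraph has size at most `N ^ α(G) + 1`. -/
theorem stepUp_indepNum {N : ℕ} (G : SimpleGraph (Fin N)) (S : Finset (Fin N → Bool))
    (hS : ∀ a ∈ S, ∀ b ∈ S, ∀ c ∈ S, lexLt a b → lexLt b c → ¬ stepEdge G a b c) :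
    S.card ≤ N ^ indepNum G + 1 := by
  classical
  have hsub : S.image (lowerDeltas S) ⊆
      univ.filter fun T : Finset (Fin N) => T.card ≤ indepNum G := by
    intro T hT
    obtain ⟨c, hc, rfl⟩ := mem_image.mp hT
    exact mem_filter.mpr ⟨mem_univ _, card_le_indepNum G _ fun u hu v hv => not_adj_of_mem_lowerDeltas G hS hc hu hv⟩
  calc S.card = (S.image (lowerDeltas S)).card := (card_image_of_injOn (lowerDeltas_injOn S)).symm
    _ ≤ _ := card_le_card hsub
    _ ≤ N ^ indepNum G + 1 := by simpa using card_filter_card_le (α := Fin N) (indepNum G)
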